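/- For all n ≥ 1: ∑_{k=1}^{n} (-1)^{k-1}·T(n,k)·k·((k-1)!)² = (-1)^{n-1}·G_{2n}, where T(n,k) are the central factorial numbers of the second kind and G_{2n} the unsigned Genocchi numbers. -/

import Mathlib

/-- Central factorial numbers of the second kind:
T(n,k) = T(n-1,k-1) + k² T(n-1,k), T(0,k)=[k=0], T(n,0)=[n=0]. -/
def centralFactorialT : ℕ → ℕ → ℕ
  | 0, 0 => 1
  | 0, _ + 1 => 0
  | _ + 1, 0 => 0
  | n + 1, k + 1 => centralFactorialT n k + (k + 1) ^ 2 * centralFactorialT n (k + 1)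

open PowerSeries in
/-- The exponential generating function 2z/(1+e^z) of the Genocchi numbers. -/
noncomputable def genocchiSeries : PowerSeries ℚ :=
  2 * PowerSeries.X * (1 + PowerSeries.exp ℚ)⁻¹

/-- The unsigned Genocchi numbers `G (2n)` : since
2z/(1+e^z) = z + ∑_{n≥1} (-1)^n G_{2n} z^{2n}/(2n)!, we recover
G_{2n} = (-1)^n (2n)! [z^{2n}] (2z/(1+e^z)); this also gives G 0 = 0. -/
noncomputable def genocchi (n : ℕ) : ℚ :=
  (-1) ^ n * (2 * n).factorial * PowerSeries.coeff (R := ℚ) (2 * n) genocchiSeries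

/-!
Put `U = e^z + e^{-z} - 2 = (2 sinh(z/2))²`. The exponential generating function of `T(·, k)`
is `U^k / (2k)!`, so the left-hand side is `(2n)! [z^{2n}] ∑_{k=1}^n a_k U^k` with
`a_k = (-1)^(k-1) k ((k-1)!)² / (2k)!`. Both `∑_{k≥1} a_k U^k` and
`z tanh(z/2) = z - 2z/(1+e^z)` solve `2 sinh z · f' = 2 f + U` with `[z¹] f = 0`, which
determines `f` coefficient by coefficient; truncating the sum at `k = n` only perturbs the
equation by `O(U^(n+1)) = O(z^(2n+2))`.
-/

open PowerSeries Nat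

namespace CentralFactorialGenocchi

noncomputable def expNeg : ℚ⟦X⟧ := evalNegHom (exp ℚ)

noncomputable def twoSinh : ℚ⟦X⟧ := exp ℚ - expNeg

noncomputable def twoCoshSubTwo : ℚ⟦X⟧ := exp ℚ + expNeg - 2

lemma coeff_expNeg (n : ℕ) : coeff n expNeg = (-1) ^ n / n ! := by
  simp [expNeg, evalNegHom, coeff_rescale, div_eq_mul_inv]

lemma derivative_expNeg : d⁄dX ℚ expNeg = -expNeg := by
  ext n
  rw [coeff_derivative, coeff_expNeg, map_neg, coeff_expNeg, factorial_succ, pow_succ]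
  push_cast
  field_simp

lemma constantCoeff_expNeg : constantCoeff expNeg = 1 := by
  simp [← coeff_zero_eq_constantCoeff_apply, coeff_expNeg]

lemma exp_mul_expNeg : exp ℚ * expNeg = 1 := exp_mul_exp_neg_eq_one

lemma derivative_twoCoshSubTwo : d⁄dX ℚ twoCoshSubTwo = twoSinh := by
  rw [twoCoshSubTwo, twoSinh, map_sub, map_add, derivative_exp, derivative_expNeg,
    ← map_ofNat C, derivative_C]
  ring

lemma derivative_twoSinh : d⁄dX ℚ twoSinh = twoCoshSubTwo + 2 := by
  rw [twoCoshSubTwo, twoSinh, map_sub, derivative_exp, derivative_expNeg]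
  ring

lemma twoSinh_sq : twoSinh ^ 2 = twoCoshSubTwo ^ 2 + 4 * twoCoshSubTwo := by
  rw [twoSinh, twoCoshSubTwo]
  linear_combination (-4 : ℚ⟦X⟧) * exp_mul_expNeg

lemma constantCoeff_twoSinh : constantCoeff twoSinh = 0 := by
  simp [twoSinh, constantCoeff_expNeg]

lemma coeff_one_twoSinh : coeff 1 twoSinh = 2 := by
  norm_num [twoSinh, coeff_expNeg]

lemma X_sq_dvd_twoCoshSubTwo : (X : ℚ⟦X⟧) ^ 2 ∣ twoCoshSubTwo := by
  rw [X_pow_dvd_iff, twoCoshSubTwo, ← map_ofNat C 2]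
  intro m hm
  interval_cases m <;> norm_num [constantCoeff_expNeg, coeff_expNeg, coeff_C]

lemma coeff_pow_twoCoshSubTwo_of_lt {m k : ℕ} (h : m < 2 * k) :
    coeff m (twoCoshSubTwo ^ k) = 0 := by
  have : (X : ℚ⟦X⟧) ^ (2 * k) ∣ twoCoshSubTwo ^ k := by
    rw [pow_mul]
    exact pow_dvd_pow_of_dvd X_sq_dvd_twoCoshSubTwo k
  exact X_pow_dvd_iff.mp this m h

lemma derivative_twoCoshSubTwo_pow_succ (k : ℕ) :
    d⁄dX ℚ (twoCoshSubTwo ^ (k + 1)) = (k + 1) * twoCoshSubTwo ^ k * twoSinh := by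
  rw [derivative_pow, derivative_twoCoshSubTwo]
  push_cast
  ring

lemma derivative_derivative_twoCoshSubTwo_pow_succ (k : ℕ) :
    d⁄dX ℚ (d⁄dX ℚ (twoCoshSubTwo ^ (k + 1))) =
      (k + 1) ^ 2 * twoCoshSubTwo ^ (k + 1) + (2 * k + 2) * (2 * k + 1) * twoCoshSubTwo ^ k := by
  rw [derivative_twoCoshSubTwo_pow_succ, Derivation.leibniz, Derivation.leibniz,
    derivative_twoSinh]
  rcases k with _ | k
  · simp
  · rw [derivative_twoCoshSubTwo_pow_succ]
    simp only [smul_eq_mul, map_add, Derivation.map_natCast, Derivation.map_one_eq_zero]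
    push_cast
    linear_combination ((k : ℚ⟦X⟧) + 2) * (k + 1) * twoCoshSubTwo ^ k * twoSinh_sq

lemma coeff_derivative_derivative (f : ℚ⟦X⟧) (n : ℕ) :
    coeff n (d⁄dX ℚ (d⁄dX ℚ f)) = (n + 1) * (n + 2) * coeff (n + 2) f := by
  rw [coeff_derivative, coeff_derivative]
  push_cast
  ring

lemma cast_factorial_two_mul_add_two (n : ℕ) :
    ((2 * n + 2)! : ℚ) = (2 * n + 1) * (2 * n + 2) * (2 * n)! := by
  rw [show 2 * n + 2 = 2 * n + 1 + 1 from rfl, factorial_succ, factorial_succ]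
  push_cast
  ring

lemma coeff_two_mul_add_two_twoCoshSubTwo_pow_succ (n k : ℕ) :
    (2 * n + 1) * (2 * n + 2) * coeff (2 * n + 2) (twoCoshSubTwo ^ (k + 1)) =
      (k + 1) ^ 2 * coeff (2 * n) (twoCoshSubTwo ^ (k + 1)) +
        (2 * k + 2) * (2 * k + 1) * coeff (2 * n) (twoCoshSubTwo ^ k) := by
  have h := coeff_derivative_derivative (twoCoshSubTwo ^ (k + 1)) (2 * n)
  rw [derivative_derivative_twoCoshSubTwo_pow_succ, map_add,
    show ((k : ℚ⟦X⟧) + 1) ^ 2 = C (((k : ℚ) + 1) ^ 2) by simp,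
    show (2 * (k : ℚ⟦X⟧) + 2) * (2 * k + 1) = C ((2 * (k : ℚ) + 2) * (2 * k + 1)) by
      simp [map_ofNat C],
    coeff_C_mul, coeff_C_mul] at h
  push_cast at h
  rw [← h]

lemma factorial_mul_centralFactorialT (n k : ℕ) :
    ((2 * k)! : ℚ) * centralFactorialT n k = (2 * n)! * coeff (2 * n) (twoCoshSubTwo ^ k) := by
  induction n generalizing k with
  | zero =>
    rcases k with _ | k
    · simp [centralFactorialT]
    · simp [centralFactorialT, coeff_pow_twoCoshSubTwo_of_lt]
  | succ n ih =>
    rcases k with _ | k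
    · simp [centralFactorialT, coeff_one]
    · have ih_succ := ih (k + 1)
      rw [mul_add_one, cast_factorial_two_mul_add_two] at ih_succ ⊢
      rw [centralFactorialT, mul_add_one, cast_factorial_two_mul_add_two]
      push_cast at ih_succ ⊢
      linear_combination (2 * (k : ℚ) + 2) * (2 * k + 1) * ih k + ((k : ℚ) + 1) ^ 2 * ih_succ
        - ((2 * n)! : ℚ) * coeff_two_mul_add_two_twoCoshSubTwo_pow_succ n k

lemma twoSinh_mul_derivative_twoCoshSubTwo_pow_succ (k : ℕ) :
    twoSinh * d⁄dX ℚ (twoCoshSubTwo ^ (k + 1)) =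
      (k + 1) * (twoCoshSubTwo ^ (k + 2) + 4 * twoCoshSubTwo ^ (k + 1)) := by
  rw [derivative_twoCoshSubTwo_pow_succ]
  linear_combination ((k : ℚ⟦X⟧) + 1) * twoCoshSubTwo ^ k * twoSinh_sq

/-- `z tanh(z/2) = ∑_{k ≥ 1} tanhCoeff k • (2 cosh z - 2)^k`: substitute `y = 2 sinh(z/2)` in
`y d/dy (2 arsinh²(y/2)) = ∑_{k ≥ 1} 2 (-1)^(k-1) y^(2k) / (k binom(2k,k))`. -/
def tanhCoeff (k : ℕ) : ℚ := (-1) ^ (k - 1) * k * ((k - 1)! : ℚ) ^ 2 / (2 * k)!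

lemma tanhCoeff_one : tanhCoeff 1 = 1 / 2 := by
  norm_num [tanhCoeff]

lemma tanhCoeff_succ {k : ℕ} (hk : 1 ≤ k) :
    (4 * k + 2) * tanhCoeff (k + 1) = -(k * tanhCoeff k) := by
  obtain ⟨j, rfl⟩ := Nat.exists_eq_add_of_le' hk
  simp only [tanhCoeff, Nat.add_sub_cancel]
  rw [Nat.mul_add_one 2 (j + 1), cast_factorial_two_mul_add_two]
  push_cast [factorial_succ]
  field_simp
  ring

noncomputable def tanhPartialSum (N : ℕ) : ℚ⟦X⟧ :=
  ∑ k ∈ Finset.Icc 1 N, C (tanhCoeff k) * twoCoshSubTwo ^ k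

lemma twoSinh_mul_derivative_tanhPartialSum {N : ℕ} (hN : 1 ≤ N) :
    twoSinh * d⁄dX ℚ (tanhPartialSum N) =
      2 * tanhPartialSum N + twoCoshSubTwo + C (N * tanhCoeff N) * twoCoshSubTwo ^ (N + 1) := by
  induction N, hN using Nat.le_induction with
  | base =>
    have h := twoSinh_mul_derivative_twoCoshSubTwo_pow_succ 0
    have half : 2 * C (1 / 2 : ℚ) = 1 := by rw [← map_ofNat C 2, ← map_mul]; norm_num
    simp only [tanhPartialSum, Finset.Icc_self, Finset.sum_singleton, tanhCoeff_one,
      Derivation.leibniz, derivative_C, smul_eq_mul, Nat.cast_one, one_mul, zero_add,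
      pow_one] at h ⊢
    linear_combination C (1 / 2 : ℚ) * h + twoCoshSubTwo * half
  | succ N hN ih =>
    have h := twoSinh_mul_derivative_twoCoshSubTwo_pow_succ N
    have hrec := congrArg C (tanhCoeff_succ hN)
    rw [tanhPartialSum, Finset.sum_Icc_succ_top (by omega), ← tanhPartialSum, map_add,
      Derivation.leibniz, derivative_C, smul_zero, add_zero, smul_eq_mul]
    simp only [map_mul, map_add, map_neg, map_natCast, map_ofNat] at ih hrec ⊢
    push_cast
    linear_combination ih + C (tanhCoeff (N + 1)) * h + twoCoshSubTwo ^ (N + 1) * hrec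

lemma constantCoeff_one_add_exp : constantCoeff (1 + exp ℚ) = 2 := by
  norm_num

lemma X_sub_genocchiSeries_mul_one_add_exp :
    (X - genocchiSeries) * (1 + exp ℚ) = X * (exp ℚ - 1) := by
  have h : (1 + exp ℚ)⁻¹ * (1 + exp ℚ) = 1 :=
    PowerSeries.inv_mul_cancel _ (by rw [constantCoeff_one_add_exp]; norm_num)
  rw [genocchiSeries]
  linear_combination -2 * (X : ℚ⟦X⟧) * h

lemma twoSinh_mul_derivative_X_sub_genocchiSeries :
    twoSinh * d⁄dX ℚ (X - genocchiSeries) = 2 * (X - genocchiSeries) + twoCoshSubTwo := by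
  have h := X_sub_genocchiSeries_mul_one_add_exp
  have hd := congrArg (d⁄dX ℚ) h
  simp only [Derivation.leibniz, smul_eq_mul, map_add, map_sub, derivative_exp, derivative_X,
    Derivation.map_one_eq_zero] at hd
  have hne : exp ℚ * (1 + exp ℚ) ≠ 0 := by
    intro h0
    simpa using congrArg constantCoeff h0
  -- clear the denominator `e^z (1 + e^z)`, then use `e^z e^{-z} = 1`
  apply mul_right_cancel₀ hne
  rw [twoSinh, twoCoshSubTwo, map_sub, derivative_X]
  linear_combination (exp ℚ ^ 2 - 1) * hd - (exp ℚ ^ 2 + exp ℚ) * h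
    - ((1 + exp ℚ) * (1 - d⁄dX ℚ genocchiSeries) + 1 + exp ℚ) * exp_mul_expNeg

lemma coeff_twoSinh_mul_derivative {f : ℚ⟦X⟧} {m : ℕ} (hf : ∀ i < m, coeff i f = 0) :
    coeff m (twoSinh * d⁄dX ℚ f) = 2 * m * coeff m f := by
  rcases m with _ | m
  · simp [constantCoeff_twoSinh]
  rw [coeff_mul, Finset.sum_eq_single_of_mem (1, m) (by simp [add_comm])]
  · rw [coeff_one_twoSinh, coeff_derivative]
    push_cast
    ring
  · rintro ⟨_ | _ | i, j⟩ hij hne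
    · simp [constantCoeff_twoSinh]
    · simp_all [add_comm]
    · rw [Finset.HasAntidiagonal.mem_antidiagonal] at hij
      rw [coeff_derivative, hf (j + 1) (by omega), zero_mul, mul_zero]

/-- Since `2 sinh z = 2z + O(z³)`, the coefficient of `z^m` in `2 sinh z · f' - 2 f` is
`2 (m - 1) [z^m] f` plus terms in lower coefficients of `f`. -/
lemma coeff_eq_zero_of_twoSinh_mul_derivative {f R : ℚ⟦X⟧} {M : ℕ}
    (h : twoSinh * d⁄dX ℚ f = 2 * f + R) (hf : coeff 1 f = 0) (hR : ∀ i < M, coeff i R = 0) :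
    ∀ i < M, coeff i f = 0 := by
  intro i
  induction i using Nat.strong_induction_on with
  | _ i ih =>
    intro hi
    have hcoeff := congrArg (coeff i) h
    rw [coeff_twoSinh_mul_derivative fun j hj => ih j hj (hj.trans hi), map_add, hR i hi,
      ← map_ofNat C 2, coeff_C_mul] at hcoeff
    rcases eq_or_ne i 1 with rfl | hi1
    · exact hf
    · have : ((i : ℚ) - 1) * coeff i f = 0 := by linear_combination hcoeff / 2
      exact (mul_eq_zero.mp this).resolve_left (sub_ne_zero.mpr (by exact_mod_cast hi1))

lemma coeff_one_genocchiSeries : coeff 1 genocchiSeries = 1 := by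
  rw [genocchiSeries, mul_comm 2, mul_assoc, coeff_succ_X_mul, coeff_zero_eq_constantCoeff_apply,
    map_mul, constantCoeff_inv, constantCoeff_one_add_exp, map_ofNat]
  norm_num

lemma coeff_tanhPartialSum {n m : ℕ} (hn : 1 ≤ n) (hm : m < 2 * n + 2) :
    coeff m (tanhPartialSum n) = coeff m (X - genocchiSeries) := by
  have hode : twoSinh * d⁄dX ℚ (X - genocchiSeries - tanhPartialSum n) =
      2 * (X - genocchiSeries - tanhPartialSum n) +
        C (-(n * tanhCoeff n)) * twoCoshSubTwo ^ (n + 1) := by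
    rw [map_sub, map_neg]
    linear_combination twoSinh_mul_derivative_X_sub_genocchiSeries -
      twoSinh_mul_derivative_tanhPartialSum hn
  have hcoeff_one : coeff 1 (X - genocchiSeries - tanhPartialSum n) = 0 := by
    simp only [map_sub, coeff_one_X, coeff_one_genocchiSeries, tanhPartialSum, map_sum,
      coeff_C_mul]
    rw [Finset.sum_eq_zero fun k hk => by
      rw [coeff_pow_twoCoshSubTwo_of_lt (by simp at hk; omega), mul_zero]]
    ring
  have hR : ∀ i < 2 * n + 2, coeff i (C (-(n * tanhCoeff n)) * twoCoshSubTwo ^ (n + 1)) = 0 :=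
    fun i hi => by rw [coeff_C_mul, coeff_pow_twoCoshSubTwo_of_lt (by omega), mul_zero]
  have := coeff_eq_zero_of_twoSinh_mul_derivative hode hcoeff_one hR m hm
  rw [map_sub] at this
  exact (sub_eq_zero.mp this).symm

end CentralFactorialGenocchi

open CentralFactorialGenocchi

theorem sum_centralFactorialT_genocchi (n : ℕ) (hn : 1 ≤ n) :
    ∑ k ∈ Finset.Icc 1 n, (-1 : ℚ) ^ (k - 1) * centralFactorialT n k * k *
        ((k - 1).factorial : ℚ) ^ 2 =
      (-1) ^ (n - 1) * genocchi n := by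
  have hterm : ∀ k ∈ Finset.Icc 1 n, (-1 : ℚ) ^ (k - 1) * centralFactorialT n k * k *
      ((k - 1)! : ℚ) ^ 2 = (2 * n)! * coeff (2 * n) (C (tanhCoeff k) * twoCoshSubTwo ^ k) := by
    intro k _
    rw [coeff_C_mul, mul_left_comm, ← factorial_mul_centralFactorialT, tanhCoeff]
    field_simp
  have hsign : (-1 : ℚ) ^ (n - 1) * (-1) ^ n = -1 := by
    rw [← pow_add, show n - 1 + n = 2 * (n - 1) + 1 by omega, pow_succ, pow_mul]
    norm_num
  calc _ = (2 * n)! * coeff (2 * n) (tanhPartialSum n) := by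
        rw [tanhPartialSum, map_sum, Finset.mul_sum]
        exact Finset.sum_congr rfl hterm
    _ = (2 * n)! * coeff (2 * n) (X - genocchiSeries) := by
        rw [coeff_tanhPartialSum hn (by omega)]
    _ = (-1) ^ (n - 1) * genocchi n := by
        rw [map_sub, coeff_X, if_neg (by omega), genocchi]
        linear_combination (-((2 * n)! : ℚ) * coeff (2 * n) genocchiSeries) * hsign
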